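/- For every binary tree topology T with nodes numbered in inorder, and every assignment to each two-child node v of an interleaving M(v) of its left inner spine (size l_v) and right inner spine (size r_v), there exists a permutation A of {1,...,n} whose Cartesian tree is T and in which, for every such v, the relative order of the values at the nodes of the two inner spines of v agrees with M(v). -/

import Mathlib

inductive BT where
  | leaf : BT
  | node : BT → BT → BT
deriving DecidableEq

namespace BT

/-- Number of nodes. -/
def size : BT → ℕ
  | leaf => 0
  | node l r => l.size + r.size + 1

/-- Inorder list of node positions (paths from the root; `false` = left step). -/
def inList : BT → List (List Bool)
  | leaf => []
  | node l r => (l.inList).map (List.cons false) ++ [] :: (r.inList).map (List.cons true)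

/-- Preorder list of node positions. -/
def preList : BT → List (List Bool)
  | leaf => []
  | node l r => [] :: ((l.preList).map (List.cons false) ++ (r.preList).map (List.cons true))

/-- Subtree rooted at a given position, if the position is valid. -/
def subtree? : BT → List Bool → Option BT
  | t, [] => some t
  | leaf, _ :: _ => none
  | node l r, b :: p => if b then r.subtree? p else l.subtree? p

/-- Size of the left spine (maximal path following left children, top node included). -/
def Lspine : BT → ℕ
  | leaf => 0
  | node l _ => l.Lspine + 1

/-- Size of the right spine. -/
def Rspine : BT → ℕ
  | leaf => 0
  | node _ r => r.Rspine + 1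

/-- Size of the left inner spine of the root: right spine of the left child. -/
def lv : BT → ℕ
  | leaf => 0
  | node l _ => l.Rspine

/-- Size of the right inner spine of the root: left spine of the right child. -/
def rv : BT → ℕ
  | leaf => 0
  | node _ r => r.Lspine

/-- Sum of `f` over all (sub)trees rooted at nodes of the tree. -/
def sumNodes (f : BT → ℕ) : BT → ℕ
  | leaf => 0
  | node l r => f (node l r) + sumNodes f l + sumNodes f r

/-- Number of leaf nodes (nodes with no children). -/
def leaves : BT → ℕ
  | leaf => 0
  | node leaf leaf => 1
  | node l r => leaves l + leaves r

end BT

/-- Longest common prefix of two paths: the LCA of two positions in a binary tree. -/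
def lcp : List Bool → List Bool → List Bool
  | a :: p, b :: q => if a = b then a :: lcp p q else []
  | _, _ => []

/-- Index of the minimum element of a list (0 if empty). -/
def minIdx {α : Type*} [LinearOrder α] (l : List α) : ℕ :=
  match l.argmin id with
  | none => 0
  | some a => l.idxOf a

/-- Cartesian tree construction with fuel. -/
def cartesianAux {α : Type*} [LinearOrder α] : ℕ → List α → BT
  | 0, _ => .leaf
  | _ + 1, [] => .leaf
  | n + 1, l@(_ :: _) =>
      .node (cartesianAux n (l.take (minIdx l))) (cartesianAux n (l.drop (minIdx l + 1)))

/-- The Cartesian tree of a list: root at the position of the minimum,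
recursively built on the prefix before and the suffix after the minimum. -/
def cartesian {α : Type*} [LinearOrder α] (l : List α) : BT :=
  cartesianAux l.length l

/-- `k` is the position of the minimum of `A` on the range `[i, j]`. -/
def isArgmin {α : Type*} [LinearOrder α] {n : ℕ} (A : Fin n → α) (i j k : Fin n) : Prop :=
  i ≤ k ∧ k ≤ j ∧ ∀ m, i ≤ m → m ≤ j → A k ≤ A m

/-- `k` is the position of the second smallest element of `A` on the range `[i, j]`. -/
def isSecondMin {α : Type*} [LinearOrder α] {n : ℕ} (A : Fin n → α) (i j k : Fin n) : Prop :=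
  i ≤ k ∧ k ≤ j ∧
    ∃ m, isArgmin A i j m ∧ k ≠ m ∧ ∀ l, i ≤ l → l ≤ j → l ≠ m → A k ≤ A l

/-- The node with inorder number `i` in `t` has a left child. -/
def hasLeftChildAt (t : BT) (i : ℕ) : Prop :=
  ∃ (p : List Bool) (ll lr r : BT),
    t.inList[i]? = some p ∧ t.subtree? p = some (.node (.node ll lr) r)

/-- Index of the `k`-th (0-indexed) occurrence of `b` in `w` (`w.length` if none). -/
def nthIdx (w : List Bool) (b : Bool) (k : ℕ) : ℕ :=
  ((List.range w.length).filter fun i => w.getD i (!b) = b).getD k w.length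

/-- `M` assigns to each two-child node of `t` a valid merge word of its inner spines:
a word of length `l_v + r_v` with exactly `r_v` occurrences of `true`. -/
def validMerge (t : BT) (M : List Bool → List Bool) : Prop :=
  ∀ p l r, t.subtree? p = some (.node l r) → l ≠ .leaf → r ≠ .leaf →
    (M p).length = l.Rspine + r.Lspine ∧ (M p).count true = r.Lspine

/-- The array `A` realizes the extended Cartesian tree `(t, M)`: its Cartesian tree is `t`
and, at every two-child node, the relative order of the values on the two inner spines
agrees with the merge word (which lists, in increasing value order, `false` for an element
of the left inner spine and `true` for one of the right inner spine). -/
def realizes {α : Type*} [LinearOrder α] {n : ℕ} (A : Fin n → α) (t : BT)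
    (M : List Bool → List Bool) : Prop :=
  cartesian (List.ofFn A) = t ∧
  ∀ p l r, t.subtree? p = some (.node l r) → l ≠ .leaf → r ≠ .leaf →
    ∀ (k k' : ℕ), k < l.Rspine → k' < r.Lspine →
      ∀ x y : Fin n,
        t.inList[(x : ℕ)]? = some (p ++ false :: List.replicate k true) →
        t.inList[(y : ℕ)]? = some (p ++ true :: List.replicate k' false) →
        (A x < A y ↔ nthIdx (M p) false k < nthIdx (M p) true k')

/-!
Induction on the tree, realizing every tree by a list of distinct reals. Whether a list
realizes `(t, M)` depends only on the relative order of its entries, so the realizations of the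
two subtrees may be transformed by arbitrary strictly increasing maps of `ℝ`. Along the right
spine of the left subtree, and along the left spine of the right subtree, the values increase
downward (heap property of Cartesian trees); hence a piecewise-linear increasing map can move
the `k`-th of them to the position of the `k`-th `false` (resp. `true`) in the merge word.
Shifting the right half by a generic `δ ∈ (0, 1)` keeps all entries distinct without changing
any comparison between the two spines, and a new minimum placed between the halves becomes the
root.
-/

namespace List

variable {α : Type*}

theorem getD_append_cons_of_lt {P Q : List α} {v d : α} {i : ℕ} (hi : i < P.length) :
    (P ++ v :: Q).getD i d = P.getD i d :=
  getD_append _ _ _ _ hi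

theorem getD_append_cons_length (P Q : List α) (v d : α) : (P ++ v :: Q).getD P.length d = v := by
  simp

theorem getD_append_cons_of_gt {P Q : List α} {v d : α} {i : ℕ} (hi : P.length < i) :
    (P ++ v :: Q).getD i d = Q.getD (i - P.length - 1) d := by
  rw [getD_append_right _ _ _ _ hi.le, show i - P.length = i - P.length - 1 + 1 by omega]
  rfl

theorem getD_map_of_lt {β : Type*} {L : List α} (f : α → β) {i : ℕ} (hi : i < L.length)
    (d : α) (d' : β) : (L.map f).getD i d' = f (L.getD i d) := by
  rw [getD_eq_getElem _ _ hi, getD_eq_getElem _ _ (by simpa using hi), getElem_map]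

theorem nodup_append_cons_of_forall_lt [Preorder α] {P Q : List α} {v : α} (hP : P.Nodup)
    (hQ : Q.Nodup) (hPQ : ∀ a ∈ P, ∀ b ∈ Q, a ≠ b) (hv : ∀ x ∈ P ++ Q, v < x) :
    (P ++ v :: Q).Nodup := by
  rw [nodup_middle, nodup_cons, nodup_append]
  exact ⟨fun h => lt_irrefl _ (hv v h), hP, hQ, hPQ⟩

theorem Nodup.injective_getD {L : List α} (hL : L.Nodup) {n : ℕ} (hn : L.length = n) (d : α) :
    Function.Injective fun i : Fin n => L.getD i d := fun i j hij => by
  dsimp only at hij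
  rw [getD_eq_getElem _ _ (i.2.trans_eq hn.symm), getD_eq_getElem _ _ (j.2.trans_eq hn.symm),
    hL.getElem_inj_iff] at hij
  exact Fin.ext hij

theorem ofFn_getD {L : List α} {n : ℕ} (h : L.length = n) (d : α) :
    ofFn (fun i : Fin n => L.getD i d) = L := by
  subst h
  exact ext_getElem (by simp) fun i _ _ => by simp

theorem exists_lt_forall_mem [LinearOrder α] [NoMinOrder α] [Nonempty α] (L : List α) :
    ∃ ρ, ∀ x ∈ L, ρ < x := by
  obtain ⟨b, hb⟩ := L.finite_toSet.bddBelow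
  obtain ⟨ρ, hρ⟩ := exists_lt b
  exact ⟨ρ, fun x hx => hρ.trans_le (hb hx)⟩

end List

theorem exists_mem_Ioo_forall_ne_add (A B : List ℝ) :
    ∃ δ ∈ Set.Ioo (0 : ℝ) 1, ∀ a ∈ A, ∀ b ∈ B, a ≠ b + δ := by
  obtain ⟨δ, hδ, hδS⟩ := (Set.Ioo_infinite (zero_lt_one' ℝ)).exists_notMem_finset
    ((A.toFinset ×ˢ B.toFinset).image fun q => q.1 - q.2)
  refine ⟨δ, hδ, fun a ha b hb hab => hδS (Finset.mem_image.2 ⟨(a, b), ?_, by simp [hab]⟩)⟩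
  simp [ha, hb]

theorem natCast_lt_natCast_add_iff {a b : ℕ} (hab : a ≠ b) {δ : ℝ} (hδ : δ ∈ Set.Ioo (0 : ℝ) 1) :
    (a : ℝ) < b + δ ↔ a < b := by
  obtain ⟨hδ₀, hδ₁⟩ := hδ
  constructor
  · intro h
    by_contra h'
    have : (b : ℝ) + 1 ≤ a := by exact_mod_cast (show b + 1 ≤ a by omega)
    linarith
  · intro h
    have : (a : ℝ) < b := by exact_mod_cast h
    linarith

theorem exists_strictMono_eq_id_on_Iic_apply_eq {a t c : ℝ} (ht : a < t) (hc : a < c) :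
    ∃ g : ℝ → ℝ, StrictMono g ∧ (∀ x ≤ a, g x = x) ∧ g t = c := by
  set slope := (c - a) / (t - a)
  have hslope : 0 < slope := div_pos (by linarith) (by linarith)
  refine ⟨fun x => if x ≤ a then x else a + (x - a) * slope, fun x y hxy => ?_,
    fun x hx => if_pos hx, ?_⟩
  · dsimp only
    split_ifs with hx hy hy
    · exact hxy
    · nlinarith
    · linarith
    · nlinarith
  · simp only [if_neg (not_le.2 ht), slope, mul_div_cancel₀ _ (sub_pos.2 ht).ne']
    ring

theorem exists_strictMono_comp_eq {m : ℕ} {s c : Fin m → ℝ} (hs : StrictMono s)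
    (hc : StrictMono c) : ∃ φ : ℝ → ℝ, StrictMono φ ∧ φ ∘ s = c := by
  induction m with
  | zero => exact ⟨id, strictMono_id, funext fun k => k.elim0⟩
  | succ m ih =>
    obtain ⟨φ, hφ, hφs⟩ := ih (hs.comp Fin.strictMono_castSucc) (hc.comp Fin.strictMono_castSucc)
    have hφs' (k : Fin m) : φ (s k.castSucc) = c k.castSucc := congrFun hφs k
    set t := φ (s (Fin.last m))
    set S := insert (min t (c (Fin.last m)) - 1) (Finset.univ.image (c ∘ Fin.castSucc))
    have hS : S.Nonempty := Finset.insert_nonempty _ _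
    have hSt : S.max' hS < min t (c (Fin.last m)) := by
      simp only [Finset.max'_lt_iff, S, Finset.mem_insert, Finset.mem_image]
      rintro _ (rfl | ⟨k, -, rfl⟩)
      · linarith
      · exact lt_min ((hφs' k).symm.trans_lt (hφ (hs k.castSucc_lt_last)))
          (hc k.castSucc_lt_last)
    obtain ⟨g, hg, hgS, hgt⟩ := exists_strictMono_eq_id_on_Iic_apply_eq
      (hSt.trans_le (min_le_left _ _)) (hSt.trans_le (min_le_right _ _))
    refine ⟨g ∘ φ, hg.comp hφ, funext fun k => ?_⟩
    induction k using Fin.lastCases with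
    | last => exact hgt
    | cast k =>
      simp only [Function.comp_apply, hφs']
      exact hgS _ (S.le_max' _
        (Finset.mem_insert_of_mem (Finset.mem_image_of_mem _ (Finset.mem_univ k))))

section Cartesian

variable {α β : Type*} [LinearOrder α] [LinearOrder β]

/-- Stated with `<` only, so that it transfers along any order-preserving change of values. -/
def IsFirstArgmin (L : List α) (k : ℕ) : Prop :=
  ∃ hk : k < L.length, (∀ i (hi : i < L.length), ¬ L[i] < L[k]) ∧ ∀ i (hi : i < k), L[k] < L[i]

theorem isFirstArgmin_minIdx {L : List α} (h : L ≠ []) : IsFirstArgmin L (minIdx L) := by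
  obtain ⟨a, ha⟩ : ∃ a, L.argmin id = some a :=
    Option.ne_none_iff_exists'.1 (by simpa [List.argmin_eq_none] using h)
  have hmem : a ∈ L := List.argmin_mem ha
  have hlt : L.idxOf a < L.length := List.idxOf_lt_length_iff.2 hmem
  simp only [minIdx, ha]
  refine ⟨hlt, fun i hi => ?_, fun i hi => ?_⟩ <;> rw [List.getElem_idxOf hlt]
  · exact not_lt.2 (List.le_of_mem_argmin (List.getElem_mem hi) ha)
  · have hne : L[i] ≠ a := by simpa using List.not_of_lt_findIdx hi
    exact lt_of_le_of_ne (List.le_of_mem_argmin (List.getElem_mem _) ha) hne.symm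

theorem IsFirstArgmin.eq {L : List α} {j k : ℕ} (hj : IsFirstArgmin L j)
    (hk : IsFirstArgmin L k) : j = k := by
  obtain ⟨hj, hjmin, hjfirst⟩ := hj
  obtain ⟨hk, hkmin, hkfirst⟩ := hk
  rcases lt_trichotomy j k with h | h | h
  · exact absurd (hkfirst j h) (hjmin k hk)
  · exact h
  · exact absurd (hjfirst k h) (hkmin j hj)

theorem minIdx_eq_of_isFirstArgmin {L : List α} {k : ℕ} (hk : IsFirstArgmin L k) :
    minIdx L = k :=
  (isFirstArgmin_minIdx (List.ne_nil_of_length_pos (Nat.zero_lt_of_lt hk.1))).eq hk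

theorem minIdx_lt_length {L : List α} (h : L ≠ []) : minIdx L < L.length :=
  (isFirstArgmin_minIdx h).1

theorem cartesianAux_congr_fuel {L : List α} {m n : ℕ} (hm : L.length ≤ m) (hn : L.length ≤ n) :
    cartesianAux m L = cartesianAux n L := by
  induction m generalizing L n with
  | zero => cases n <;> simp_all [cartesianAux]
  | succ m ih =>
    obtain _ | ⟨x, xs⟩ := L
    · cases n <;> rfl
    obtain _ | n := n
    · simp at hn
    have hlt := minIdx_lt_length (List.cons_ne_nil x xs)
    simp only [List.length_cons] at hm hn hlt
    simp only [cartesianAux]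
    congr 1 <;> apply ih <;> simp only [List.length_take, List.length_drop, List.length_cons] <;>
      omega

theorem cartesian_eq_node_take_drop {L : List α} (h : L ≠ []) :
    cartesian L = .node (cartesian (L.take (minIdx L))) (cartesian (L.drop (minIdx L + 1))) := by
  obtain ⟨x, xs, rfl⟩ := List.exists_cons_of_ne_nil h
  have hlt := minIdx_lt_length h
  simp only [List.length_cons] at hlt
  simp only [cartesian, List.length_cons, cartesianAux]
  congr 1 <;> apply cartesianAux_congr_fuel <;>
    simp only [List.length_take, List.length_drop, List.length_cons] <;> omega

theorem size_cartesian (L : List α) : (cartesian L).size = L.length := by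
  induction h : L.length using Nat.strong_induction_on generalizing L with
  | _ n ih =>
    rcases eq_or_ne L [] with rfl | hL
    · rw [← h]; rfl
    have hlt := minIdx_lt_length hL
    rw [cartesian_eq_node_take_drop hL, BT.size, ih _ (by simp; omega) _ rfl,
      ih _ (by simp; omega) _ rfl]
    simp only [List.length_take, List.length_drop]
    omega

theorem cartesian_append_cons {P Q : List α} {v : α} (h : ∀ x ∈ P ++ Q, v < x) :
    cartesian (P ++ v :: Q) = .node (cartesian P) (cartesian Q) := by
  have hv : IsFirstArgmin (P ++ v :: Q) P.length := by
    refine ⟨by simp, fun i hi => ?_, fun i hi => ?_⟩ <;>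
      simp only [List.getElem_append_right le_rfl, Nat.sub_self, List.getElem_cons_zero]
    · rcases List.mem_cons.1 (List.perm_middle.subset (List.getElem_mem hi)) with heq | hmem
      · exact heq.symm ▸ lt_irrefl v
      · exact (h _ hmem).not_gt
    · rw [List.getElem_append_left hi]
      exact h _ (List.mem_append_left _ (List.getElem_mem hi))
  rw [cartesian_eq_node_take_drop (by simp), minIdx_eq_of_isFirstArgmin hv]
  simp

theorem cartesian_eq_of_lt_iff {L : List α} {L' : List β} (hlen : L.length = L'.length)
    (h : ∀ i j (hi : i < L.length) (hj : j < L.length), L[i] < L[j] ↔ L'[i] < L'[j]) :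
    cartesian L = cartesian L' := by
  induction hn : L.length using Nat.strong_induction_on generalizing L L' with
  | _ n ih =>
    rcases eq_or_ne L [] with rfl | hL
    · rw [List.eq_nil_of_length_eq_zero hlen.symm]; rfl
    have hL' : L' ≠ [] := by rintro rfl; exact hL (List.eq_nil_of_length_eq_zero hlen)
    have hfirst : IsFirstArgmin L' (minIdx L) := by
      obtain ⟨hlt, hmin, hfirst⟩ := isFirstArgmin_minIdx hL
      exact ⟨hlen ▸ hlt, fun i hi => (h i _ (hlen ▸ hi) hlt).not.1 (hmin i _),
        fun i hi => (h _ i hlt (hi.trans hlt)).1 (hfirst i hi)⟩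
    have hlt := minIdx_lt_length hL
    rw [cartesian_eq_node_take_drop hL, cartesian_eq_node_take_drop hL',
      minIdx_eq_of_isFirstArgmin hfirst]
    congr 1
    · refine ih _ (by simp; omega) (by simp [hlen]) (fun i j hi hj => ?_) rfl
      simp only [List.length_take] at hi hj
      simpa using h i j (by omega) (by omega)
    · refine ih _ (by simp; omega) (by simp [hlen]) (fun i j hi hj => ?_) rfl
      simp only [List.length_drop] at hi hj
      simpa using h _ _ (by omega) (by omega)

end Cartesian

theorem realizes.of_lt_iff {α β : Type*} [LinearOrder α] [LinearOrder β] {n : ℕ}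
    {A : Fin n → α} {B : Fin n → β} {t : BT} {M : List Bool → List Bool} (h : realizes A t M)
    (hAB : ∀ i j, B i < B j ↔ A i < A j) : realizes B t M := by
  refine ⟨h.1 ▸ cartesian_eq_of_lt_iff (by simp) fun i j hi hj => ?_,
    fun p l r hs hl hr k k' hk hk' x y hx hy =>
      (hAB x y).trans (h.2 p l r hs hl hr k k' hk hk' x y hx hy)⟩
  simpa using hAB ⟨i, by simpa using hi⟩ ⟨j, by simpa using hj⟩

theorem exists_perm_lt_iff_of_injective {α : Type*} [LinearOrder α] {n : ℕ} {A : Fin n → α}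
    (hA : Function.Injective A) : ∃ σ : Equiv.Perm (Fin n), ∀ i j, σ i < σ j ↔ A i < A j := by
  set S := Finset.univ.image A
  have hS : S.card = n := by simp [S, Finset.card_image_of_injective _ hA]
  let f i := (S.orderIsoOfFin hS).symm ⟨A i, Finset.mem_image_of_mem _ (Finset.mem_univ i)⟩
  have hf : ∀ i j, f i < f j ↔ A i < A j := fun i j => (OrderIso.lt_iff_lt _).trans Iff.rfl
  have hinj : Function.Injective f := fun i j hij =>
    hA (le_antisymm (not_lt.1 fun h => ((hf j i).2 h).ne' hij)
      (not_lt.1 fun h => ((hf i j).2 h).ne hij))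
  exact ⟨Equiv.ofBijective f hinj.bijective_of_finite, hf⟩

namespace BT

theorem length_inList (t : BT) : t.inList.length = t.size := by
  induction t with
  | leaf => rfl
  | node l r ihl ihr =>
    simp only [inList, size, List.length_append, List.length_map, List.length_cons, ihl, ihr]
    omega

theorem nodup_inList (t : BT) : t.inList.Nodup := by
  induction t with
  | leaf => exact List.nodup_nil
  | node l r ihl ihr =>
    simp only [inList, List.nodup_append, List.nodup_cons]
    refine ⟨ihl.map (List.cons_injective), ⟨by simp, ihr.map List.cons_injective⟩, ?_⟩
    simp

theorem getElem?_inList_node (l r : BT) (x : ℕ) :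
    (node l r).inList[x]? =
      if x < l.size then l.inList[x]?.map (List.cons false)
      else if x = l.size then some []
      else r.inList[x - l.size - 1]?.map (List.cons true) := by
  simp only [inList, List.getElem?_append, List.length_map, length_inList, List.getElem?_map]
  split_ifs with hlt heq
  · rfl
  · simp [heq]
  · rw [List.getElem?_cons, if_neg (by omega), List.getElem?_map]

theorem getElem?_inList_node_eq_false_cons_iff {l r : BT} {x : ℕ} {q : List Bool} :
    (node l r).inList[x]? = some (false :: q) ↔ x < l.size ∧ l.inList[x]? = some q := by
  rw [getElem?_inList_node]
  split_ifs with h₁ h₂ <;> simp [h₁]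

theorem getElem?_inList_node_eq_nil_iff {l r : BT} {x : ℕ} :
    (node l r).inList[x]? = some [] ↔ x = l.size := by
  rw [getElem?_inList_node]
  split_ifs with h₁ h₂
  · exact iff_of_false (by simp) (by omega)
  · simp [h₂]
  · exact iff_of_false (by simp) h₂

theorem getElem?_inList_node_eq_true_cons_iff {l r : BT} {x : ℕ} {q : List Bool} :
    (node l r).inList[x]? = some (true :: q) ↔
      l.size < x ∧ r.inList[x - l.size - 1]? = some q := by
  rw [getElem?_inList_node]
  split_ifs with h₁ h₂
  · exact iff_of_false (by simp) fun h => by omega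
  · exact iff_of_false (by simp) fun h => by omega
  · simp only [Option.map_eq_some_iff, List.cons.injEq, true_and, exists_eq_right]
    exact ⟨fun h => ⟨by omega, h⟩, And.right⟩

theorem lt_size_of_getElem?_inList_eq_some {t : BT} {x : ℕ} {q : List Bool}
    (h : t.inList[x]? = some q) : x < t.size :=
  t.length_inList ▸ (List.getElem?_eq_some_iff.1 h).1

theorem replicate_true_mem_inList {t : BT} {k : ℕ} (hk : k < t.Rspine) :
    List.replicate k true ∈ t.inList := by
  induction t generalizing k with
  | leaf => simp [Rspine] at hk
  | node l r _ ihr => cases k <;> simp_all [inList, Rspine, List.replicate_succ]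

theorem replicate_false_mem_inList {t : BT} {k : ℕ} (hk : k < t.Lspine) :
    List.replicate k false ∈ t.inList := by
  induction t generalizing k with
  | leaf => simp [Lspine] at hk
  | node l r ihl _ => cases k <;> simp_all [inList, Lspine, List.replicate_succ]

end BT

section Heap

variable {α : Type*} [LinearOrder α]

theorem exists_eq_append_cons_of_cartesian_eq_node {L : List α} {l r : BT}
    (h : cartesian L = .node l r) (hL : L.Nodup) :
    ∃ P v Q, L = P ++ v :: Q ∧ cartesian P = l ∧ cartesian Q = r ∧ P.Nodup ∧ Q.Nodup ∧
      ∀ x ∈ P ++ Q, v < x := by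
  have hne : L ≠ [] := by rintro rfl; cases h
  obtain ⟨hlt, hmin, -⟩ := isFirstArgmin_minIdx hne
  rw [cartesian_eq_node_take_drop hne, BT.node.injEq] at h
  have hsplit := (List.getElem_cons_drop hlt ▸ List.take_append_drop (minIdx L) L).symm
  rw [hsplit, List.nodup_middle, List.nodup_cons, List.nodup_append] at hL
  refine ⟨_, _, _, hsplit, h.1, h.2, hL.2.1, hL.2.2.1, fun x hx => ?_⟩
  have hx' : x ∈ L := (List.mem_append.1 hx).elim List.mem_of_mem_take List.mem_of_mem_drop
  obtain ⟨i, hi, rfl⟩ := List.getElem_of_mem hx'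
  exact lt_of_le_of_ne (not_lt.1 (hmin i hi)) fun heq => hL.1 (heq ▸ hx)

theorem getD_lt_getD_of_inList_eq_replicate_true {t : BT} {L : List α} (hc : cartesian L = t)
    (hL : L.Nodup) {j k x y : ℕ} (hjk : j < k)
    (hx : t.inList[x]? = some (List.replicate j true))
    (hy : t.inList[y]? = some (List.replicate k true)) (d : α) :
    L.getD x d < L.getD y d := by
  induction t generalizing L j k x y with
  | leaf => simp [BT.inList] at hx
  | node l r _ ihr =>
    obtain ⟨P, v, Q, rfl, hcP, hcQ, -, hQ, hv⟩ := exists_eq_append_cons_of_cartesian_eq_node hc hL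
    have hP : P.length = l.size := hcP ▸ (size_cartesian P).symm
    obtain ⟨k, rfl⟩ := Nat.exists_eq_add_one_of_ne_zero (Nat.ne_zero_of_lt hjk)
    rw [List.replicate_succ, BT.getElem?_inList_node_eq_true_cons_iff, ← hP] at hy
    rw [List.getD_append_cons_of_gt hy.1]
    cases j with
    | zero =>
      rw [List.replicate_zero, BT.getElem?_inList_node_eq_nil_iff, ← hP] at hx
      have hyQ : y - P.length - 1 < Q.length := by
        rw [← size_cartesian Q, hcQ]; exact BT.lt_size_of_getElem?_inList_eq_some hy.2
      rw [hx, List.getD_append_cons_length, List.getD_eq_getElem _ _ hyQ]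
      exact hv _ (List.mem_append_right _ (List.getElem_mem hyQ))
    | succ j =>
      rw [List.replicate_succ, BT.getElem?_inList_node_eq_true_cons_iff, ← hP] at hx
      rw [List.getD_append_cons_of_gt hx.1]
      exact ihr hcQ hQ (by omega) hx.2 hy.2

theorem getD_lt_getD_of_inList_eq_replicate_false {t : BT} {L : List α} (hc : cartesian L = t)
    (hL : L.Nodup) {j k x y : ℕ} (hjk : j < k)
    (hx : t.inList[x]? = some (List.replicate j false))
    (hy : t.inList[y]? = some (List.replicate k false)) (d : α) :
    L.getD x d < L.getD y d := by
  induction t generalizing L j k x y with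
  | leaf => simp [BT.inList] at hx
  | node l r ihl _ =>
    obtain ⟨P, v, Q, rfl, hcP, hcQ, hP', -, hv⟩ := exists_eq_append_cons_of_cartesian_eq_node hc hL
    have hP : P.length = l.size := hcP ▸ (size_cartesian P).symm
    obtain ⟨k, rfl⟩ := Nat.exists_eq_add_one_of_ne_zero (Nat.ne_zero_of_lt hjk)
    rw [List.replicate_succ, BT.getElem?_inList_node_eq_false_cons_iff, ← hP] at hy
    rw [List.getD_append_cons_of_lt hy.1]
    cases j with
    | zero =>
      rw [List.replicate_zero, BT.getElem?_inList_node_eq_nil_iff, ← hP] at hx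
      rw [hx, List.getD_append_cons_length, List.getD_eq_getElem _ _ hy.1]
      exact hv _ (List.mem_append_left _ (List.getElem_mem hy.1))
    | succ j =>
      rw [List.replicate_succ, BT.getElem?_inList_node_eq_false_cons_iff, ← hP] at hx
      rw [List.getD_append_cons_of_lt hx.1]
      exact ihl hcP hP' (by omega) hx.2 hy.2

end Heap

theorem nthIdx_eq_idxOfNth (w : List Bool) (b : Bool) (k : ℕ) :
    nthIdx w b k = w.idxOfNth b k := by
  have hfilter : (List.range w.length).filter (fun i => w.getD i (!b) = b) = w.idxsOf b := by
    refine List.Pairwise.eq_of_mem_iff (r := (· < ·)) (List.pairwise_lt_range.filter _)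
      List.pairwise_findIdxs fun i => ?_
    rw [List.mem_idxsOf_iff_exists_getElem_pos]
    simp only [List.mem_filter, List.mem_range, decide_eq_true_eq, beq_iff_eq]
    exact ⟨fun ⟨hi, h⟩ => ⟨hi, by rwa [List.getD_eq_getElem _ _ hi] at h⟩,
      fun ⟨hi, h⟩ => ⟨hi, by rwa [List.getD_eq_getElem _ _ hi]⟩⟩
  have hlen : (w.idxsOf b).length = w.count b := List.length_findIdxs
  rw [nthIdx, hfilter]
  by_cases hk : k < w.count b
  · rw [List.getD_eq_getElem _ _ (hlen ▸ hk), List.getElem_idxOf_eq_idxOfNth]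
  · rw [List.getD_eq_default _ _ (by omega), List.idxOfNth_eq_length_of_ge_count (by omega)]

theorem nthIdx_lt_nthIdx_iff {w : List Bool} {b : Bool} {j k : ℕ} (hj : j < w.count b) :
    nthIdx w b j < nthIdx w b k ↔ j < k := by
  rw [nthIdx_eq_idxOfNth, nthIdx_eq_idxOfNth]
  exact List.idxOfNth_lt_idxOfNth_iff_of_lt_count hj

theorem nthIdx_false_ne_nthIdx_true {w : List Bool} {j k : ℕ} (hj : j < w.count false)
    (hk : k < w.count true) : nthIdx w false j ≠ nthIdx w true k := by
  rw [nthIdx_eq_idxOfNth, nthIdx_eq_idxOfNth]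
  intro h
  have hf := List.getElem_idxOfNth_eq (h := List.idxOfNth_lt_length_of_lt_count hj)
  have ht := List.getElem_idxOfNth_eq (h := List.idxOfNth_lt_length_of_lt_count hk)
  simp only [h] at hf
  exact Bool.false_ne_true (hf.symm.trans ht)

theorem validMerge.node_left {l r : BT} {M : List Bool → List Bool}
    (hM : validMerge (.node l r) M) : validMerge l (fun q => M (false :: q)) :=
  fun p l' r' h => hM (false :: p) l' r' (by simpa [BT.subtree?] using h)

theorem validMerge.node_right {l r : BT} {M : List Bool → List Bool}
    (hM : validMerge (.node l r) M) : validMerge r (fun q => M (true :: q)) :=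
  fun p l' r' h => hM (true :: p) l' r' (by simpa [BT.subtree?] using h)

theorem validMerge.count_root {l r : BT} {M : List Bool → List Bool}
    (hM : validMerge (.node l r) M) (hl : l ≠ .leaf) (hr : r ≠ .leaf) :
    (M []).count false = l.Rspine ∧ (M []).count true = r.Lspine := by
  have := (M []).count_false_add_count_true
  have := hM [] l r rfl hl hr
  omega

theorem exists_strictMono_eq_on_rightSpine {t : BT} {L : List ℝ} (hc : cartesian L = t)
    (hL : L.Nodup) {c : Fin t.Rspine → ℝ} (hc' : StrictMono c) :
    ∃ φ : ℝ → ℝ, StrictMono φ ∧ ∀ (k : Fin t.Rspine) (x : ℕ),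
      t.inList[x]? = some (List.replicate k true) → φ (L.getD x 0) = c k := by
  have hpos (k : Fin t.Rspine) := List.getElem?_idxOf (BT.replicate_true_mem_inList k.2)
  obtain ⟨φ, hφ, hφc⟩ := exists_strictMono_comp_eq (s := fun k =>
    L.getD (t.inList.idxOf (List.replicate k true)) 0)
    (fun j k hjk => getD_lt_getD_of_inList_eq_replicate_true hc hL hjk (hpos j) (hpos k) 0) hc'
  refine ⟨φ, hφ, fun k x hx => ?_⟩
  obtain ⟨hx, hxk⟩ := List.getElem?_eq_some_iff.1 hx
  rw [← congrFun hφc k, Function.comp_apply, ← hxk, t.nodup_inList.idxOf_getElem]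

theorem exists_strictMono_eq_on_leftSpine {t : BT} {L : List ℝ} (hc : cartesian L = t)
    (hL : L.Nodup) {c : Fin t.Lspine → ℝ} (hc' : StrictMono c) :
    ∃ φ : ℝ → ℝ, StrictMono φ ∧ ∀ (k : Fin t.Lspine) (x : ℕ),
      t.inList[x]? = some (List.replicate k false) → φ (L.getD x 0) = c k := by
  have hpos (k : Fin t.Lspine) := List.getElem?_idxOf (BT.replicate_false_mem_inList k.2)
  obtain ⟨φ, hφ, hφc⟩ := exists_strictMono_comp_eq (s := fun k =>
    L.getD (t.inList.idxOf (List.replicate k false)) 0)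
    (fun j k hjk => getD_lt_getD_of_inList_eq_replicate_false hc hL hjk (hpos j) (hpos k) 0) hc'
  refine ⟨φ, hφ, fun k x hx => ?_⟩
  obtain ⟨hx, hxk⟩ := List.getElem?_eq_some_iff.1 hx
  rw [← congrFun hφc k, Function.comp_apply, ← hxk, t.nodup_inList.idxOf_getElem]

theorem realizes.map {α β : Type*} [LinearOrder α] [LinearOrder β] {n : ℕ} {L : List α}
    {d : α} {d' : β} {t : BT} {M : List Bool → List Bool}
    (h : realizes (fun i : Fin n => L.getD i d) t M) (hn : L.length = n) {f : α → β}
    (hf : StrictMono f) : realizes (fun i : Fin n => (L.map f).getD i d') t M :=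
  h.of_lt_iff fun i j => by
    rw [List.getD_map_of_lt f (hn ▸ i.2) d, List.getD_map_of_lt f (hn ▸ j.2) d]
    exact hf.lt_iff_lt

theorem realizes_node {l r : BT} {M : List Bool → List Bool} {L₁ L₂ : List ℝ} {ρ : ℝ}
    (hlen₁ : L₁.length = l.size) (hlen₂ : L₂.length = r.size)
    (h₁ : realizes (fun i : Fin l.size => L₁.getD i 0) l (fun q => M (false :: q)))
    (h₂ : realizes (fun i : Fin r.size => L₂.getD i 0) r (fun q => M (true :: q)))
    (hρ : ∀ x ∈ L₁ ++ L₂, ρ < x)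
    (hroot : l ≠ .leaf → r ≠ .leaf → ∀ k k' x y, k < l.Rspine → k' < r.Lspine →
      l.inList[x]? = some (List.replicate k true) →
      r.inList[y]? = some (List.replicate k' false) →
      (L₁.getD x 0 < L₂.getD y 0 ↔ nthIdx (M []) false k < nthIdx (M []) true k')) :
    realizes (fun i : Fin (BT.node l r).size => (L₁ ++ ρ :: L₂).getD i 0) (.node l r) M := by
  refine ⟨?_, fun p l' r' hs hl hr k k' hk hk' x y hx hy => ?_⟩
  · rw [List.ofFn_getD (by simp [BT.size, hlen₁, hlen₂]; omega), cartesian_append_cons hρ,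
      ← List.ofFn_getD hlen₁ 0, ← List.ofFn_getD hlen₂ 0, h₁.1, h₂.1]
  dsimp only
  obtain _ | ⟨_ | _, p⟩ := p
  · obtain ⟨rfl, rfl⟩ : l = l' ∧ r = r' := by simpa [BT.subtree?] using hs
    rw [List.nil_append, BT.getElem?_inList_node_eq_false_cons_iff, ← hlen₁] at hx
    rw [List.nil_append, BT.getElem?_inList_node_eq_true_cons_iff, ← hlen₁] at hy
    rw [List.getD_append_cons_of_lt hx.1, List.getD_append_cons_of_gt hy.1]
    exact hroot hl hr k k' _ _ hk hk' hx.2 hy.2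
  · rw [List.cons_append, BT.getElem?_inList_node_eq_false_cons_iff, ← hlen₁] at hx hy
    rw [List.getD_append_cons_of_lt hx.1, List.getD_append_cons_of_lt hy.1]
    exact h₁.2 p l' r' (by simpa [BT.subtree?] using hs) hl hr k k' hk hk' ⟨x, hlen₁ ▸ hx.1⟩
      ⟨y, hlen₁ ▸ hy.1⟩ hx.2 hy.2
  · rw [List.cons_append, BT.getElem?_inList_node_eq_true_cons_iff, ← hlen₁] at hx hy
    rw [List.getD_append_cons_of_gt hx.1, List.getD_append_cons_of_gt hy.1]
    exact h₂.2 p l' r' (by simpa [BT.subtree?] using hs) hl hr k k' hk hk'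
      ⟨_, BT.lt_size_of_getElem?_inList_eq_some hx.2⟩
      ⟨_, BT.lt_size_of_getElem?_inList_eq_some hy.2⟩ hx.2 hy.2

theorem exists_realizes_node {l r : BT} {M : List Bool → List Bool}
    (hM : validMerge (.node l r) M) {L₁ L₂ : List ℝ}
    (hlen₁ : L₁.length = l.size) (hlen₂ : L₂.length = r.size) (hnd₁ : L₁.Nodup) (hnd₂ : L₂.Nodup)
    (h₁ : realizes (fun i : Fin l.size => L₁.getD i 0) l (fun q => M (false :: q)))
    (h₂ : realizes (fun i : Fin r.size => L₂.getD i 0) r (fun q => M (true :: q))) :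
    ∃ L : List ℝ, L.length = (BT.node l r).size ∧ L.Nodup ∧
      realizes (fun i : Fin (BT.node l r).size => L.getD i 0) (.node l r) M := by
  have hc₁ : cartesian L₁ = l := List.ofFn_getD hlen₁ 0 ▸ h₁.1
  have hc₂ : cartesian L₂ = r := List.ofFn_getD hlen₂ 0 ▸ h₂.1
  obtain ⟨φ, ψ, hφ, hψ, hspines⟩ : ∃ φ ψ : ℝ → ℝ, StrictMono φ ∧ StrictMono ψ ∧
      (l ≠ .leaf → r ≠ .leaf → ∀ k k' x y, k < l.Rspine → k' < r.Lspine →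
        l.inList[x]? = some (List.replicate k true) →
        r.inList[y]? = some (List.replicate k' false) →
        φ (L₁.getD x 0) = nthIdx (M []) false k ∧ ψ (L₂.getD y 0) = nthIdx (M []) true k') := by
    by_cases hlr : l ≠ .leaf ∧ r ≠ .leaf
    · obtain ⟨hfalse, htrue⟩ := hM.count_root hlr.1 hlr.2
      obtain ⟨φ, hφ, hφs⟩ := exists_strictMono_eq_on_rightSpine hc₁ hnd₁
        (c := fun k => (nthIdx (M []) false k : ℝ))
        fun j k hjk => Nat.cast_lt.2 ((nthIdx_lt_nthIdx_iff (j.2.trans_eq hfalse.symm)).2 hjk)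
      obtain ⟨ψ, hψ, hψs⟩ := exists_strictMono_eq_on_leftSpine hc₂ hnd₂
        (c := fun k => (nthIdx (M []) true k : ℝ))
        fun j k hjk => Nat.cast_lt.2 ((nthIdx_lt_nthIdx_iff (j.2.trans_eq htrue.symm)).2 hjk)
      exact ⟨φ, ψ, hφ, hψ, fun _ _ k k' x y hk hk' hx hy =>
        ⟨hφs ⟨k, hk⟩ x hx, hψs ⟨k', hk'⟩ y hy⟩⟩
    · exact ⟨id, id, strictMono_id, strictMono_id, fun hl hr => absurd ⟨hl, hr⟩ hlr⟩
  obtain ⟨δ, hδ, hδne⟩ := exists_mem_Ioo_forall_ne_add (L₁.map φ) (L₂.map ψ)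
  have hψδ : StrictMono (ψ · + δ) := hψ.add_const δ
  obtain ⟨ρ, hρ⟩ := (L₁.map φ ++ L₂.map (ψ · + δ)).exists_lt_forall_mem
  refine ⟨L₁.map φ ++ ρ :: L₂.map (ψ · + δ), by simp [BT.size, hlen₁, hlen₂]; omega, ?_,
    realizes_node (by simpa) (by simpa) (h₁.map hlen₁ hφ) (h₂.map hlen₂ hψδ) hρ ?_⟩
  · refine List.nodup_append_cons_of_forall_lt (hnd₁.map hφ.injective)
      (hnd₂.map hψδ.injective) ?_ hρ
    simp only [List.mem_map]
    rintro _ ⟨a, ha, rfl⟩ _ ⟨b, hb, rfl⟩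
    exact hδne _ (List.mem_map_of_mem ha) _ (List.mem_map_of_mem hb)
  · intro hl hr k k' x y hk hk' hx hy
    have hx' := BT.lt_size_of_getElem?_inList_eq_some hx
    have hy' := BT.lt_size_of_getElem?_inList_eq_some hy
    obtain ⟨hfalse, htrue⟩ := hM.count_root hl hr
    rw [List.getD_map_of_lt φ (hlen₁ ▸ hx') 0, List.getD_map_of_lt _ (hlen₂ ▸ hy') 0,
      (hspines hl hr k k' x y hk hk' hx hy).1, (hspines hl hr k k' x y hk hk' hx hy).2]
    exact natCast_lt_natCast_add_iff
      (nthIdx_false_ne_nthIdx_true (hfalse ▸ hk) (htrue ▸ hk')) hδ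

theorem exists_realizes (t : BT) (M : List Bool → List Bool) (hM : validMerge t M) :
    ∃ L : List ℝ, L.length = t.size ∧ L.Nodup ∧
      realizes (fun i : Fin t.size => L.getD i 0) t M := by
  induction t generalizing M with
  | leaf =>
    refine ⟨[], rfl, List.nodup_nil, rfl, fun p l r hs => ?_⟩
    cases p <;> simp [BT.subtree?] at hs
  | node l r ihl ihr =>
    obtain ⟨L₁, hlen₁, hnd₁, h₁⟩ := ihl _ hM.node_left
    obtain ⟨L₂, hlen₂, hnd₂, h₂⟩ := ihr _ hM.node_right
    exact exists_realizes_node hM hlen₁ hlen₂ hnd₁ hnd₂ h₁ h₂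

/-- Every extended Cartesian tree `(t, M)` on `n` nodes is realized by some permutation
of `{1,…,n}`: its Cartesian tree is `t` and the relative order of the values on the two
inner spines of every two-child node agrees with the interleaving `M`. -/
theorem stmt16 (n : ℕ) (t : BT) (ht : t.size = n) (M : List Bool → List Bool)
    (hM : validMerge t M) :
    ∃ σ : Equiv.Perm (Fin n), realizes (fun i => σ i) t M := by
  subst ht
  obtain ⟨L, hlen, hnd, hL⟩ := exists_realizes t M hM
  obtain ⟨σ, hσ⟩ := exists_perm_lt_iff_of_injective (hnd.injective_getD hlen 0)
  exact ⟨σ, hL.of_lt_iff hσ⟩
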